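/- Let A ∈ ℝ^{n×n} be a nonsingular monotone matrix, A = P₁ − R₁ + S₁ a double weak regular splitting and A = P₂ − R₂ + S₂ a double regular splitting of A. Suppose I − S₂P₁⁻¹ and I + R₂P₁⁻¹ are nonsingular, Â⁻¹ ≥ 0 and 𝒜̂⁻¹ ≥ 0, where Â = (I − S₂P₁⁻¹)A and 𝒜̂ = (I + R₂P₁⁻¹)A. Setting P̂ = 𝒫̂ = P₂, R̂ = R₂ − S₂P₁⁻¹R₁ and ℛ̂ = R₂P₁⁻¹R₁ − S₂, if 𝒫̂⁻¹ℛ̂ ≥ P̂⁻¹R̂ and 𝒫̂⁻¹𝒜̂ ≥ P̂⁻¹Â, then ρ(𝒲₁₂) ≤ ρ(W₁₂) < 1, where W₁₂ = [[P₂⁻¹R₂ − P₂⁻¹S₂P₁⁻¹R₁, P₂⁻¹S₂P₁⁻¹S₁], [I, 0]] and 𝒲₁₂ = [[P₂⁻¹R₂P₁⁻¹R₁ − P₂⁻¹S₂, −P₂⁻¹R₂P₁⁻¹S₁], [I, 0]]. -/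

import Mathlib

open Matrix

/-- Spectral radius of a real square matrix: the maximum modulus of its complex eigenvalues. -/
noncomputable def specRad {ι : Type*} [Fintype ι] [DecidableEq ι] (M : Matrix ι ι ℝ) : ℝ :=
  sSup ((fun z : ℂ => ‖z‖) '' spectrum ℂ (M.map Complex.ofReal))

/-- `X` satisfies the four Penrose equations for `A`, i.e. `X` is the Moore-Penrose
inverse of `A`. -/
def IsMP {m n : ℕ} (A : Matrix (Fin m) (Fin n) ℝ) (X : Matrix (Fin n) (Fin m) ℝ) : Prop :=
  A * X * A = A ∧ X * A * X = X ∧ (A * X)ᵀ = A * X ∧ (X * A)ᵀ = X * A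

/-- Entrywise comparison of matrices: `MatLE A B` means `A ≤ B` entrywise. -/
def MatLE {m n : ℕ} (A B : Matrix (Fin m) (Fin n) ℝ) : Prop := ∀ i j, A i j ≤ B i j

/-!
Both iteration matrices have the shape `W = [[B, C], [I, 0]]`, and the sign conditions on the
splittings make all four blocks entrywise nonnegative. If `W v = z v` over `ℂ`, then
`v = (z w, w)` and `r = |w| ≥ 0` satisfies `|z|² r ≤ |z| B r + C r`; conversely, such an `r`
makes `x = (t r, r)` a nonnegative subeigenvector, `t x ≤ W x`, and Gelfand's formula applied to
`‖Wᵐ‖ ≥ tᵐ x_i / ‖x‖` gives `t ≤ ρ(W)`.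

Let `B₁, C₁` be the blocks of `W₁₂` and `B₂, C₂` those of `𝒲₁₂`. With `T₁ = B₁ + C₁` we have
`P₂⁻¹ Â = I - T₁`, a weak regular splitting of the monotone matrix `Â`: the partial sums of
`∑ T₁ᵏ P₂⁻¹` are bounded by `Â⁻¹`, so `T₁ᵏ → 0`. An eigenvalue of `W₁₂` with `|z| ≥ 1` would give
`r ≤ T₁ r`, hence `r ≤ T₁ᵏ r → 0`; so `ρ(W₁₂) < 1`, and likewise for `𝒲₁₂` with `𝒜̂`. Finally,
for `t = ρ(𝒲₁₂) ≤ 1` the hypotheses `B₁ ≤ B₂` and `T₂ ≤ T₁` give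
`t B₂ + C₂ = T₂ - (1 - t) B₂ ≤ T₁ - (1 - t) B₁ = t B₁ + C₁`, so the vector `r` obtained from
`𝒲₁₂` also works for `W₁₂`.
-/

open Matrix Filter Topology

section NonnegMatrix

variable {ι : Type*} [Fintype ι]

lemma Matrix.mul_apply_nonneg {l m n : Type*} [Fintype m] {A : Matrix l m ℝ} {B : Matrix m n ℝ}
    (hA : ∀ i j, 0 ≤ A i j) (hB : ∀ i j, 0 ≤ B i j) (i : l) (j : n) : 0 ≤ (A * B) i j :=
  Finset.sum_nonneg fun k _ => mul_nonneg (hA i k) (hB k j)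

lemma Matrix.mulVec_mono_of_nonneg {T : Matrix ι ι ℝ} (hT : ∀ i j, 0 ≤ T i j) {x y : ι → ℝ}
    (hxy : x ≤ y) : T *ᵥ x ≤ T *ᵥ y := fun i =>
  Finset.sum_le_sum fun k _ => mul_le_mul_of_nonneg_left (hxy k) (hT i k)

lemma norm_smul_le_mulVec_norm {N : Matrix ι ι ℝ} (hN : ∀ i j, 0 ≤ N i j) {z : ℂ} {v : ι → ℂ}
    (hv : N.map Complex.ofReal *ᵥ v = z • v) :
    ‖z‖ • (fun i => ‖v i‖) ≤ N *ᵥ fun i => ‖v i‖ := fun i => by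
  calc ‖z‖ * ‖v i‖ = ‖(N.map Complex.ofReal *ᵥ v) i‖ := by simp [hv]
    _ ≤ ∑ j, ‖(N i j : ℂ) * v j‖ := norm_sum_le _ _
    _ = (N *ᵥ fun i => ‖v i‖) i := by
      simp [Matrix.mulVec, dotProduct, Complex.norm_real, abs_of_nonneg (hN _ _)]

variable [DecidableEq ι]

lemma pow_smul_le_pow_mulVec {N : Matrix ι ι ℝ} (hN : ∀ i j, 0 ≤ N i j) {x : ι → ℝ} {t : ℝ}
    (ht : 0 ≤ t) (hx : t • x ≤ N *ᵥ x) (k : ℕ) : t ^ k • x ≤ (N ^ k) *ᵥ x := by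
  induction k with
  | zero => simp
  | succ k ih =>
    calc t ^ (k + 1) • x = t ^ k • (t • x) := by rw [pow_succ, mul_smul]
      _ ≤ t ^ k • (N *ᵥ x) := smul_le_smul_of_nonneg_left hx (pow_nonneg ht k)
      _ = N *ᵥ (t ^ k • x) := by rw [Matrix.mulVec_smul]
      _ ≤ N *ᵥ ((N ^ k) *ᵥ x) := Matrix.mulVec_mono_of_nonneg hN ih
      _ = (N ^ (k + 1)) *ᵥ x := by rw [Matrix.mulVec_mulVec, pow_succ']

lemma nonpos_of_le_mulVec_of_tendsto_pow {T : Matrix ι ι ℝ} (hT : ∀ i j, 0 ≤ T i j)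
    (hlim : Tendsto (fun k => T ^ k) atTop (𝓝 0)) {x : ι → ℝ} (hx : x ≤ T *ᵥ x) : x ≤ 0 := by
  have hpow : ∀ k, x ≤ (T ^ k) *ᵥ x := fun k => by
    simpa using pow_smul_le_pow_mulVec hT zero_le_one (by simpa using hx) k
  have hvec : Tendsto (fun k => (T ^ k) *ᵥ x) atTop (𝓝 0) := by
    have := ((continuous_id.matrix_mulVec (continuous_const (y := x))).tendsto 0).comp hlim
    rwa [id, Matrix.zero_mulVec] at this
  exact ge_of_tendsto' hvec hpow

lemma tendsto_pow_of_weak_regular_splitting {M P T : Matrix ι ι ℝ}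
    (hM : IsUnit M.det) (hMinv : ∀ i j, 0 ≤ M⁻¹ i j) (hP : IsUnit P.det)
    (hPinv : ∀ i j, 0 ≤ P⁻¹ i j) (hT : ∀ i j, 0 ≤ T i j) (hsplit : P⁻¹ * M = 1 - T) :
    Tendsto (fun k => T ^ k) atTop (𝓝 0) := by
  have hpartial : ∀ k, ∑ m ∈ Finset.range k, T ^ m * P⁻¹ = M⁻¹ - T ^ k * M⁻¹ := fun k => by
    rw [← Finset.sum_mul, ← Matrix.mul_nonsing_inv_cancel_right M P⁻¹ hM, hsplit,
      ← Matrix.mul_assoc, geom_sum_mul_neg, sub_mul, one_mul]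
  have hterms : Tendsto (fun k => T ^ k * P⁻¹) atTop (𝓝 0) := by
    refine tendsto_pi_nhds.2 fun i => tendsto_pi_nhds.2 fun j => ?_
    refine (summable_of_sum_range_le (c := M⁻¹ i j)
      (fun m => Matrix.mul_apply_nonneg (Matrix.pow_apply_nonneg hT m) hPinv i j)
      fun k => ?_).tendsto_atTop_zero
    have := congrFun (congrFun (hpartial k) i) j
    simp only [Matrix.sum_apply, Matrix.sub_apply] at this
    linarith [Matrix.mul_apply_nonneg (Matrix.pow_apply_nonneg hT k) hMinv i j]
  simpa [Matrix.mul_assoc, Matrix.nonsing_inv_mul P hP] using hterms.mul_const P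

end NonnegMatrix

lemma ofReal_le_spectralRadius_of_pow_mul_le {A : Type*} [NormedRing A] [NormedAlgebra ℂ A]
    [CompleteSpace A] {a : A} {t c : ℝ} (ht : 0 ≤ t) (hc : 0 < c)
    (h : ∀ m : ℕ, t ^ m * c ≤ ‖a ^ m‖) : ENNReal.ofReal t ≤ spectralRadius ℂ a := by
  have hroot : Tendsto (fun m : ℕ => c ^ (1 / m : ℝ)) atTop (𝓝 1) := by
    simpa using tendsto_const_nhds.rpow (tendsto_const_div_atTop_nhds_zero_nat 1) (Or.inl hc.ne')
  have hlow : Tendsto (fun m : ℕ => ENNReal.ofReal (t * c ^ (1 / m : ℝ))) atTop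
      (𝓝 (ENNReal.ofReal t)) := by
    simpa using ENNReal.tendsto_ofReal (hroot.const_mul t)
  refine le_of_tendsto_of_tendsto hlow
    (spectrum.pow_norm_pow_one_div_tendsto_nhds_spectralRadius a) ?_
  filter_upwards [eventually_ne_atTop 0] with m hm
  refine ENNReal.ofReal_le_ofReal ?_
  calc t * c ^ (1 / m : ℝ) = (t ^ m * c) ^ (1 / m : ℝ) := by
        rw [Real.mul_rpow (by positivity) hc.le, ← Real.rpow_natCast, ← Real.rpow_mul ht,
          mul_one_div_cancel (by exact_mod_cast hm), Real.rpow_one]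
    _ ≤ ‖a ^ m‖ ^ (1 / m : ℝ) := Real.rpow_le_rpow (by positivity) (h m) (by positivity)

section SpectralRadius

variable {ι : Type*} [Fintype ι] [DecidableEq ι]

lemma Matrix.exists_mulVec_eq_smul_of_mem_spectrum {M : Matrix ι ι ℂ} {z : ℂ}
    (hz : z ∈ spectrum ℂ M) : ∃ v ≠ 0, M *ᵥ v = z • v := by
  rw [← Matrix.spectrum_toLin', ← Module.End.hasEigenvalue_iff_mem_spectrum] at hz
  obtain ⟨v, hv⟩ := hz.exists_hasEigenvector
  exact ⟨v, hv.2, by simpa using hv.apply_eq_smul⟩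

lemma specRad_nonneg (M : Matrix ι ι ℝ) : 0 ≤ specRad M :=
  Real.sSup_nonneg fun _ ⟨_, _, h⟩ => h ▸ norm_nonneg _

lemma finite_norm_spectrum (M : Matrix ι ι ℝ) :
    ((fun z : ℂ => ‖z‖) '' spectrum ℂ (M.map Complex.ofReal)).Finite :=
  (Matrix.finite_spectrum _).image _

lemma norm_le_specRad {M : Matrix ι ι ℝ} {z : ℂ} (hz : z ∈ spectrum ℂ (M.map Complex.ofReal)) :
    ‖z‖ ≤ specRad M :=
  le_csSup (finite_norm_spectrum M).bddAbove ⟨z, hz, rfl⟩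

lemma exists_norm_eq_specRad {M : Matrix ι ι ℝ} (h : (spectrum ℂ (M.map Complex.ofReal)).Nonempty) :
    ∃ z ∈ spectrum ℂ (M.map Complex.ofReal), ‖z‖ = specRad M :=
  (h.image _).csSup_mem (finite_norm_spectrum M)

lemma specRad_lt_of_forall_norm_lt {M : Matrix ι ι ℝ} {r : ℝ} (hr : 0 < r)
    (h : ∀ z ∈ spectrum ℂ (M.map Complex.ofReal), ‖z‖ < r) : specRad M < r := by
  rcases (spectrum ℂ (M.map Complex.ofReal)).eq_empty_or_nonempty with hempty | hne
  · simpa [specRad, hempty] using hr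
  · obtain ⟨z, hz, hzr⟩ := exists_norm_eq_specRad hne
    exact hzr ▸ h z hz

section LinftyOpNorm

attribute [local instance] Matrix.linftyOpNormedAddCommGroup Matrix.linftyOpNormedRing
  Matrix.linftyOpNormedAlgebra

lemma Matrix.linfty_opNorm_map_ofReal (M : Matrix ι ι ℝ) : ‖M.map Complex.ofReal‖ = ‖M‖ := by
  simp [Matrix.linfty_opNorm_def, Complex.nnnorm_real]

lemma spectralRadius_le_ofReal_specRad (M : Matrix ι ι ℝ) :
    spectralRadius ℂ (M.map Complex.ofReal) ≤ ENNReal.ofReal (specRad M) :=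
  iSup₂_le fun z hz => by
    rw [← ENNReal.ofReal_coe_nnreal, coe_nnnorm]
    exact ENNReal.ofReal_le_ofReal (norm_le_specRad hz)

lemma le_specRad_of_smul_le_mulVec {N : Matrix ι ι ℝ} (hN : ∀ i j, 0 ≤ N i j) {x : ι → ℝ}
    (hx0 : 0 ≤ x) (hx : x ≠ 0) {t : ℝ} (ht : t • x ≤ N *ᵥ x) : t ≤ specRad N := by
  rcases lt_or_ge t 0 with ht0 | ht0
  · exact ht0.le.trans (specRad_nonneg N)
  obtain ⟨i, hi⟩ : ∃ i, 0 < x i := by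
    obtain ⟨i, hi⟩ := Function.ne_iff.mp hx
    exact ⟨i, (hx0 i).lt_of_ne' hi⟩
  have hxnorm : 0 < ‖x‖ := norm_pos_iff.2 hx
  have hgrowth : ∀ m : ℕ, t ^ m * (x i / ‖x‖) ≤ ‖(N.map Complex.ofReal) ^ m‖ := fun m => by
    have hpow : (N ^ m).map Complex.ofReal = N.map Complex.ofReal ^ m :=
      Matrix.map_pow N Complex.ofRealHom m
    rw [← hpow, Matrix.linfty_opNorm_map_ofReal, mul_div_assoc', div_le_iff₀ hxnorm]
    calc t ^ m * x i ≤ ((N ^ m) *ᵥ x) i := pow_smul_le_pow_mulVec hN ht0 ht m i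
      _ ≤ ‖(N ^ m) *ᵥ x‖ := (Real.le_norm_self _).trans (norm_le_pi_norm _ i)
      _ ≤ ‖N ^ m‖ * ‖x‖ := Matrix.linfty_opNorm_mulVec _ _
  exact (ENNReal.ofReal_le_ofReal_iff (specRad_nonneg N)).1 <|
    (ofReal_le_spectralRadius_of_pow_mul_le ht0 (div_pos hi hxnorm) hgrowth).trans
      (spectralRadius_le_ofReal_specRad N)

end LinftyOpNorm

end SpectralRadius

section IterationMatrix

variable {ι : Type*} [DecidableEq ι]

lemma fromBlocks_map_ofReal (B C : Matrix ι ι ℝ) :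
    (fromBlocks B C (1 : Matrix ι ι ℝ) 0).map Complex.ofReal =
      fromBlocks (B.map Complex.ofReal) (C.map Complex.ofReal) 1 0 := by
  simp [Matrix.fromBlocks_map]

lemma fromBlocks_apply_nonneg {B C : Matrix ι ι ℝ} (hB : ∀ i j, 0 ≤ B i j)
    (hC : ∀ i j, 0 ≤ C i j) : ∀ i j, 0 ≤ fromBlocks B C (1 : Matrix ι ι ℝ) 0 i j := by
  rintro (i | i) (j | j) <;> simp [hB, hC, Matrix.one_apply, apply_ite]

variable [Fintype ι]

lemma exists_quadratic_le_of_mem_spectrum_fromBlocks {B C : Matrix ι ι ℝ}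
    (hB : ∀ i j, 0 ≤ B i j) (hC : ∀ i j, 0 ≤ C i j) {z : ℂ}
    (hz : z ∈ spectrum ℂ ((fromBlocks B C (1 : Matrix ι ι ℝ) 0).map Complex.ofReal)) :
    ∃ r : ι → ℝ, 0 ≤ r ∧ r ≠ 0 ∧ ‖z‖ ^ 2 • r ≤ ‖z‖ • (B *ᵥ r) + C *ᵥ r := by
  obtain ⟨v, hv0, hv⟩ := Matrix.exists_mulVec_eq_smul_of_mem_spectrum hz
  have hbottom : ∀ i, v (Sum.inl i) = z * v (Sum.inr i) := fun i => by
    have := congrFun hv (Sum.inr i)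
    rw [fromBlocks_map_ofReal, fromBlocks_mulVec] at this
    simpa using this
  set r : ι → ℝ := fun i => ‖v (Sum.inr i)‖
  have hx : (fun k => ‖v k‖) = Sum.elim (‖z‖ • r) r := by
    ext (i | i) <;> simp [r, hbottom]
  refine ⟨r, fun i => norm_nonneg _, fun hr => hv0 ?_, fun i => ?_⟩
  · have hinr : ∀ i, v (Sum.inr i) = 0 := fun i => by simpa [r] using congrFun hr i
    ext (i | i) <;> simp [hbottom, hinr]
  · have := norm_smul_le_mulVec_norm (fromBlocks_apply_nonneg hB hC) hv (Sum.inl i)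
    rw [hx, fromBlocks_mulVec] at this
    simpa [Matrix.mulVec_smul, pow_two, mul_assoc] using this

lemma le_specRad_fromBlocks_of_quadratic_le {B C : Matrix ι ι ℝ} (hB : ∀ i j, 0 ≤ B i j)
    (hC : ∀ i j, 0 ≤ C i j) {r : ι → ℝ} (hr0 : 0 ≤ r) (hr : r ≠ 0) {t : ℝ} (ht : 0 ≤ t)
    (hq : t ^ 2 • r ≤ t • (B *ᵥ r) + C *ᵥ r) :
    t ≤ specRad (fromBlocks B C (1 : Matrix ι ι ℝ) 0) := by
  refine le_specRad_of_smul_le_mulVec (fromBlocks_apply_nonneg hB hC) (x := Sum.elim (t • r) r)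
    ?_ (fun h => hr (funext fun i => congrFun h (Sum.inr i))) ?_
  · rintro (i | i)
    · exact mul_nonneg ht (hr0 i)
    · exact hr0 i
  · rw [fromBlocks_mulVec]
    rintro (i | i)
    · simpa [Matrix.mulVec_smul, pow_two, mul_assoc] using hq i
    · simp

lemma specRad_fromBlocks_lt_one {B C : Matrix ι ι ℝ} (hB : ∀ i j, 0 ≤ B i j)
    (hC : ∀ i j, 0 ≤ C i j) (hlim : Tendsto (fun k => (B + C) ^ k) atTop (𝓝 0)) :
    specRad (fromBlocks B C (1 : Matrix ι ι ℝ) 0) < 1 := by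
  refine specRad_lt_of_forall_norm_lt one_pos fun z hz => ?_
  obtain ⟨r, hr0, hr, hq⟩ := exists_quadratic_le_of_mem_spectrum_fromBlocks hB hC hz
  by_contra! hz1
  refine hr (le_antisymm (nonpos_of_le_mulVec_of_tendsto_pow (T := B + C)
    (fun i j => add_nonneg (hB i j) (hC i j)) hlim fun i => ?_) hr0)
  have hqi : ‖z‖ ^ 2 * r i ≤ ‖z‖ * (B *ᵥ r) i + (C *ᵥ r) i := hq i
  have hCr : 0 ≤ (C *ᵥ r) i := Finset.sum_nonneg fun j _ => mul_nonneg (hC i j) (hr0 j)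
  rw [Matrix.add_mulVec, Pi.add_apply]
  by_contra! hlt
  nlinarith [mul_lt_mul_of_pos_left hlt (one_pos.trans_le hz1), mul_nonneg (sub_nonneg.2 hz1) hCr,
    mul_nonneg (mul_nonneg (norm_nonneg z) (hr0 i)) (sub_nonneg.2 hz1)]

lemma specRad_fromBlocks_le {B₁ C₁ B₂ C₂ : Matrix ι ι ℝ} (hB₁ : ∀ i j, 0 ≤ B₁ i j)
    (hC₁ : ∀ i j, 0 ≤ C₁ i j) (hB₂ : ∀ i j, 0 ≤ B₂ i j) (hC₂ : ∀ i j, 0 ≤ C₂ i j)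
    (hB : ∀ i j, B₁ i j ≤ B₂ i j) (hT : ∀ i j, (B₂ + C₂) i j ≤ (B₁ + C₁) i j)
    (h₂ : specRad (fromBlocks B₂ C₂ (1 : Matrix ι ι ℝ) 0) ≤ 1) :
    specRad (fromBlocks B₂ C₂ (1 : Matrix ι ι ℝ) 0) ≤
      specRad (fromBlocks B₁ C₁ (1 : Matrix ι ι ℝ) 0) := by
  rcases (spectrum ℂ
      ((fromBlocks B₂ C₂ (1 : Matrix ι ι ℝ) 0).map Complex.ofReal)).eq_empty_or_nonempty with
    hempty | hne
  · simpa [specRad, hempty] using specRad_nonneg _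
  obtain ⟨z, hz, hzt⟩ := exists_norm_eq_specRad hne
  obtain ⟨r, hr0, hr, hq⟩ := exists_quadratic_le_of_mem_spectrum_fromBlocks hB₂ hC₂ hz
  rw [← hzt] at h₂ ⊢
  refine le_specRad_fromBlocks_of_quadratic_le hB₁ hC₁ hr0 hr (norm_nonneg z)
    fun i => (hq i).trans ?_
  have hBr : (B₁ *ᵥ r) i ≤ (B₂ *ᵥ r) i :=
    Finset.sum_le_sum fun j _ => mul_le_mul_of_nonneg_right (hB i j) (hr0 j)
  have hTr : ((B₂ + C₂) *ᵥ r) i ≤ ((B₁ + C₁) *ᵥ r) i :=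
    Finset.sum_le_sum fun j _ => mul_le_mul_of_nonneg_right (hT i j) (hr0 j)
  simp only [Matrix.add_mulVec, Pi.add_apply, Pi.smul_apply, smul_eq_mul] at hTr ⊢
  linarith [mul_le_mul_of_nonneg_left hBr (sub_nonneg.2 h₂)]

end IterationMatrix

section DoubleSplitting

variable {ι : Type*} [Fintype ι] [DecidableEq ι]

lemma iteration_blocks_nonneg {P₁ R₁ S₁ P₂ R₂ S₂ : Matrix ι ι ℝ} (hP₂ : ∀ i j, 0 ≤ P₂⁻¹ i j)
    (hR₂ : ∀ i j, 0 ≤ R₂ i j) (hS₂ : ∀ i j, S₂ i j ≤ 0) (hR₁ : ∀ i j, 0 ≤ (P₁⁻¹ * R₁) i j)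
    (hS₁ : ∀ i j, (P₁⁻¹ * S₁) i j ≤ 0) :
    (∀ i j, 0 ≤ (P₂⁻¹ * R₂ - P₂⁻¹ * S₂ * P₁⁻¹ * R₁) i j) ∧
      (∀ i j, 0 ≤ (P₂⁻¹ * S₂ * P₁⁻¹ * S₁) i j) ∧
      (∀ i j, 0 ≤ (P₂⁻¹ * R₂ * P₁⁻¹ * R₁ - P₂⁻¹ * S₂) i j) ∧
      (∀ i j, 0 ≤ (-(P₂⁻¹ * R₂ * P₁⁻¹ * S₁)) i j) := by
  have hX : ∀ i j, 0 ≤ (P₂⁻¹ * R₂) i j := Matrix.mul_apply_nonneg hP₂ hR₂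
  have hY : ∀ i j, 0 ≤ (P₂⁻¹ * -S₂) i j :=
    Matrix.mul_apply_nonneg hP₂ fun i j => neg_nonneg.2 (hS₂ i j)
  have hV : ∀ i j, 0 ≤ (-(P₁⁻¹ * S₁)) i j := fun i j => neg_nonneg.2 (hS₁ i j)
  refine ⟨fun i j => ?_, fun i j => ?_, fun i j => ?_, fun i j => ?_⟩
  · rw [show P₂⁻¹ * R₂ - P₂⁻¹ * S₂ * P₁⁻¹ * R₁ = P₂⁻¹ * R₂ + P₂⁻¹ * -S₂ * (P₁⁻¹ * R₁) by
      noncomm_ring]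
    exact add_nonneg (hX i j) (Matrix.mul_apply_nonneg hY hR₁ i j)
  · rw [show P₂⁻¹ * S₂ * P₁⁻¹ * S₁ = P₂⁻¹ * -S₂ * -(P₁⁻¹ * S₁) by noncomm_ring]
    exact Matrix.mul_apply_nonneg hY hV i j
  · rw [show P₂⁻¹ * R₂ * P₁⁻¹ * R₁ - P₂⁻¹ * S₂ = P₂⁻¹ * R₂ * (P₁⁻¹ * R₁) + P₂⁻¹ * -S₂ by
      noncomm_ring]
    exact add_nonneg (Matrix.mul_apply_nonneg hX hR₁ i j) (hY i j)
  · rw [show -(P₂⁻¹ * R₂ * P₁⁻¹ * S₁) = P₂⁻¹ * R₂ * -(P₁⁻¹ * S₁) by noncomm_ring]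
    exact Matrix.mul_apply_nonneg hX hV i j

variable {α : Type*} [CommRing α]

lemma inv_mul_eq_of_splitting {A P R S : Matrix ι ι α} (hP : IsUnit P.det) (h : A = P - R + S) :
    P⁻¹ * A = 1 - P⁻¹ * R + P⁻¹ * S := by
  rw [h, mul_add, mul_sub, Matrix.nonsing_inv_mul P hP]

variable {A P₁ R₁ S₁ P₂ R₂ S₂ : Matrix ι ι α}

lemma inv_mul_one_sub_mul_inv_mul_eq (hP₁ : IsUnit P₁.det) (hP₂ : IsUnit P₂.det)
    (h₁ : A = P₁ - R₁ + S₁) (h₂ : A = P₂ - R₂ + S₂) :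
    P₂⁻¹ * ((1 - S₂ * P₁⁻¹) * A) =
      1 - ((P₂⁻¹ * R₂ - P₂⁻¹ * S₂ * P₁⁻¹ * R₁) + P₂⁻¹ * S₂ * P₁⁻¹ * S₁) := by
  calc P₂⁻¹ * ((1 - S₂ * P₁⁻¹) * A) = P₂⁻¹ * A - P₂⁻¹ * S₂ * (P₁⁻¹ * A) := by noncomm_ring
    _ = _ := by rw [inv_mul_eq_of_splitting hP₁ h₁, inv_mul_eq_of_splitting hP₂ h₂]; noncomm_ring

lemma inv_mul_one_add_mul_inv_mul_eq (hP₁ : IsUnit P₁.det) (hP₂ : IsUnit P₂.det)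
    (h₁ : A = P₁ - R₁ + S₁) (h₂ : A = P₂ - R₂ + S₂) :
    P₂⁻¹ * ((1 + R₂ * P₁⁻¹) * A) =
      1 - ((P₂⁻¹ * R₂ * P₁⁻¹ * R₁ - P₂⁻¹ * S₂) + -(P₂⁻¹ * R₂ * P₁⁻¹ * S₁)) := by
  calc P₂⁻¹ * ((1 + R₂ * P₁⁻¹) * A) = P₂⁻¹ * A + P₂⁻¹ * R₂ * (P₁⁻¹ * A) := by noncomm_ring
    _ = _ := by rw [inv_mul_eq_of_splitting hP₁ h₁, inv_mul_eq_of_splitting hP₂ h₂]; noncomm_ring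

end DoubleSplitting

theorem htads_vs_tgads_comparison_nonsingular_general {n : ℕ}
    (A P₁ R₁ S₁ P₂ R₂ S₂ : Matrix (Fin n) (Fin n) ℝ)
    (hA : IsUnit A.det)
    (hP₁ : IsUnit P₁.det)
    (hP₂ : IsUnit P₂.det)
    (hsplit₁ : A = P₁ - R₁ + S₁)
    (hsplit₂ : A = P₂ - R₂ + S₂)
    (hwr₁b : MatLE 0 (P₁⁻¹ * R₁))
    (hwr₁c : MatLE (P₁⁻¹ * S₁) 0)
    (hreg₂a : MatLE 0 P₂⁻¹)
    (hreg₂b : MatLE 0 R₂)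
    (hreg₂c : MatLE S₂ 0)
    (hunitS : IsUnit (1 - S₂ * P₁⁻¹).det)
    (hunitR : IsUnit (1 + R₂ * P₁⁻¹).det)
    (hhat : MatLE 0 ((1 - S₂ * P₁⁻¹) * A)⁻¹)
    (hcal : MatLE 0 ((1 + R₂ * P₁⁻¹) * A)⁻¹)
    (hc1 : MatLE (P₂⁻¹ * (R₂ - S₂ * P₁⁻¹ * R₁)) (P₂⁻¹ * (R₂ * P₁⁻¹ * R₁ - S₂)))
    (hc2 : MatLE (P₂⁻¹ * ((1 - S₂ * P₁⁻¹) * A)) (P₂⁻¹ * ((1 + R₂ * P₁⁻¹) * A)))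
    : specRad (Matrix.fromBlocks (P₂⁻¹ * R₂ * P₁⁻¹ * R₁ - P₂⁻¹ * S₂) (-(P₂⁻¹ * R₂ * P₁⁻¹ * S₁)) 1 0) ≤ specRad (Matrix.fromBlocks (P₂⁻¹ * R₂ - P₂⁻¹ * S₂ * P₁⁻¹ * R₁) (P₂⁻¹ * S₂ * P₁⁻¹ * S₁) 1 0) ∧ specRad (Matrix.fromBlocks (P₂⁻¹ * R₂ - P₂⁻¹ * S₂ * P₁⁻¹ * R₁) (P₂⁻¹ * S₂ * P₁⁻¹ * S₁) 1 0) < 1 := by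
  obtain ⟨hB₁, hC₁, hB₂, hC₂⟩ := iteration_blocks_nonneg hreg₂a hreg₂b hreg₂c hwr₁b hwr₁c
  have hsplitHat := inv_mul_one_sub_mul_inv_mul_eq hP₁ hP₂ hsplit₁ hsplit₂
  have hsplitCal := inv_mul_one_add_mul_inv_mul_eq hP₁ hP₂ hsplit₁ hsplit₂
  have hlim₁ := tendsto_pow_of_weak_regular_splitting
    (by rw [Matrix.det_mul]; exact hunitS.mul hA) hhat hP₂ hreg₂a
    (fun i j => add_nonneg (hB₁ i j) (hC₁ i j)) hsplitHat
  have hlim₂ := tendsto_pow_of_weak_regular_splitting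
    (by rw [Matrix.det_mul]; exact hunitR.mul hA) hcal hP₂ hreg₂a
    (fun i j => add_nonneg (hB₂ i j) (hC₂ i j)) hsplitCal
  have hB : ∀ i j, (P₂⁻¹ * R₂ - P₂⁻¹ * S₂ * P₁⁻¹ * R₁) i j ≤
      (P₂⁻¹ * R₂ * P₁⁻¹ * R₁ - P₂⁻¹ * S₂) i j := fun i j => by
    simpa only [mul_sub, Matrix.mul_assoc] using hc1 i j
  have hT : ∀ i j, ((P₂⁻¹ * R₂ * P₁⁻¹ * R₁ - P₂⁻¹ * S₂) + -(P₂⁻¹ * R₂ * P₁⁻¹ * S₁)) i j ≤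
      ((P₂⁻¹ * R₂ - P₂⁻¹ * S₂ * P₁⁻¹ * R₁) + P₂⁻¹ * S₂ * P₁⁻¹ * S₁) i j := fun i j => by
    have := hc2 i j
    rw [hsplitHat, hsplitCal, Matrix.sub_apply, Matrix.sub_apply] at this
    linarith
  exact ⟨specRad_fromBlocks_le hB₁ hC₁ hB₂ hC₂ hB hT (specRad_fromBlocks_lt_one hB₂ hC₂ hlim₂).le,
    specRad_fromBlocks_lt_one hB₁ hC₁ hlim₁⟩

theorem htads_vs_tgads_comparison_nonsingular {n : ℕ}
    (A P₁ R₁ S₁ P₂ R₂ S₂ : Matrix (Fin n) (Fin n) ℝ)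
    (hA : IsUnit A.det)
    (hmono : MatLE 0 A⁻¹)
    (hP₁ : IsUnit P₁.det)
    (hP₂ : IsUnit P₂.det)
    (hsplit₁ : A = P₁ - R₁ + S₁)
    (hsplit₂ : A = P₂ - R₂ + S₂)
    (hwr₁a : MatLE 0 P₁⁻¹)
    (hwr₁b : MatLE 0 (P₁⁻¹ * R₁))
    (hwr₁c : MatLE (P₁⁻¹ * S₁) 0)
    (hreg₂a : MatLE 0 P₂⁻¹)
    (hreg₂b : MatLE 0 R₂)
    (hreg₂c : MatLE S₂ 0)
    (hunitS : IsUnit (1 - S₂ * P₁⁻¹).det)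
    (hunitR : IsUnit (1 + R₂ * P₁⁻¹).det)
    (hhat : MatLE 0 ((1 - S₂ * P₁⁻¹) * A)⁻¹)
    (hcal : MatLE 0 ((1 + R₂ * P₁⁻¹) * A)⁻¹)
    (hc1 : MatLE (P₂⁻¹ * (R₂ - S₂ * P₁⁻¹ * R₁)) (P₂⁻¹ * (R₂ * P₁⁻¹ * R₁ - S₂)))
    (hc2 : MatLE (P₂⁻¹ * ((1 - S₂ * P₁⁻¹) * A)) (P₂⁻¹ * ((1 + R₂ * P₁⁻¹) * A)))
    : specRad (Matrix.fromBlocks (P₂⁻¹ * R₂ * P₁⁻¹ * R₁ - P₂⁻¹ * S₂) (-(P₂⁻¹ * R₂ * P₁⁻¹ * S₁)) 1 0) ≤ specRad (Matrix.fromBlocks (P₂⁻¹ * R₂ - P₂⁻¹ * S₂ * P₁⁻¹ * R₁) (P₂⁻¹ * S₂ * P₁⁻¹ * S₁) 1 0) ∧ specRad (Matrix.fromBlocks (P₂⁻¹ * R₂ - P₂⁻¹ * S₂ * P₁⁻¹ * R₁) (P₂⁻¹ * S₂ * P₁⁻¹ * S₁) 1 0) < 1 :=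
  htads_vs_tgads_comparison_nonsingular_general A P₁ R₁ S₁ P₂ R₂ S₂ hA hP₁ hP₂ hsplit₁ hsplit₂ hwr₁b
    hwr₁c hreg₂a hreg₂b hreg₂c hunitS hunitR hhat hcal hc1 hc2
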